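/- Let T : A(X,E) → A(Y,F) be a surjective linear map that preserves common zeros, where A(X,E) and A(Y,F) are almost normally multiplicative vector subspaces of C(X,E) and C(Y,F). Then for every x ∈ X the set Z_x is a singleton. -/

import Mathlib

open Set Filter Topology

/-- The zero set of a function. -/
def zeroSet {α β : Type*} [Zero β] (f : α → β) : Set α := {x | f x = 0}

/-- A vector subspace `AX` of `C(X)` is almost normal if all its members are continuous and
for every pair of subsets `P`, `Q` of `X` whose closures in the Stone–Čech compactification
`βX` are disjoint, there is `f ∈ AX` with `f = 0` on `P` and `f = 1` on `Q`. -/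
def AlmostNormal (X : Type*) [TopologicalSpace X] (AX : Submodule ℝ (X → ℝ)) : Prop :=
  (∀ φ ∈ AX, Continuous φ) ∧
  ∀ P Q : Set X,
    Disjoint (closure (stoneCechUnit '' P)) (closure (stoneCechUnit '' Q)) →
      ∃ φ ∈ AX, (∀ x ∈ P, φ x = 0) ∧ (∀ x ∈ Q, φ x = 1)

/-- A vector subspace `AXE` of `C(X,E)` is almost normally multiplicative if all its members
are continuous, it contains the constant functions, and there is an almost normal subspace
`AX` of `C(X)` such that `φ • f ∈ AXE` whenever `φ ∈ AX` and `f ∈ AXE`. -/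
def AlmostNormallyMultiplicative (X E : Type*) [TopologicalSpace X] [TopologicalSpace E]
    [AddCommGroup E] [Module ℝ E] (AXE : Submodule ℝ (X → E)) : Prop :=
  (∀ f ∈ AXE, Continuous f) ∧
  (∀ u : E, (fun _ : X => u) ∈ AXE) ∧
  ∃ AX : Submodule ℝ (X → ℝ), AlmostNormal X AX ∧
    ∀ φ ∈ AX, ∀ f ∈ AXE, (fun x => φ x • f x) ∈ AXE

/-- A map `T` between subspaces of `C(X,E)` and `C(Y,F)` preserves common zeros if for every
`k ∈ ℕ` and every finite family `f₁, …, f_k`, the zero sets of the `fᵢ` have a common point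
iff the zero sets of the `T fᵢ` do. -/
def PreservesCommonZeros {X Y E F : Type*} [TopologicalSpace X] [TopologicalSpace Y]
    [AddCommGroup E] [Module ℝ E] [AddCommGroup F] [Module ℝ F]
    {AXE : Submodule ℝ (X → E)} {AYF : Submodule ℝ (Y → F)}
    (T : AXE → AYF) : Prop :=
  ∀ (k : ℕ) (f : Fin (k + 1) → AXE),
    (⋂ i, zeroSet ((f i : X → E))).Nonempty ↔ (⋂ i, zeroSet ((T (f i) : Y → F))).Nonempty

/-- The set `Z_x ⊆ βY`: the intersection, over all `f` in the subspace vanishing at `x`, of the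
closures in `βY` of the zero sets of `T f`. -/
def Zx {X Y E F : Type*} [TopologicalSpace X] [TopologicalSpace Y]
    [AddCommGroup E] [Module ℝ E] [AddCommGroup F] [Module ℝ F]
    {AXE : Submodule ℝ (X → E)} {AYF : Submodule ℝ (Y → F)}
    (T : AXE → AYF) (x : X) : Set (StoneCech Y) :=
  ⋂ (f : AXE) (_ : (f : X → E) x = 0), closure (stoneCechUnit '' zeroSet ((T f : Y → F)))


/-!
Since `βY` is compact, `Z_x` is nonempty as soon as the closed sets `cl (Z (T f))`, `f x = 0`,
have the finite intersection property, and that is exactly preservation of common zeros applied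
to the `f`s, which all vanish at `x`.

For uniqueness, let `y₀ ≠ y₁` lie in `Z_x`. Almost normality of `Y` gives `g = φ • u` vanishing
on a neighbourhood of `y₀` and zero-free on a neighbourhood of `y₁`; write `g = T f`. Since
`Z (T f)` stays away from `y₁`, we get `f x ≠ 0`, and almost normality of `X` gives `p = ψ • e`
with `p x = 0` whose zero set misses `Z f`. Preservation of common zeros makes `Z (T p)` miss
`Z g`, which contains every point of `Y` near `y₀`, so `y₀ ∉ cl (Z (T p))`: a contradiction.
-/

open Set

section

variable {X Y E F : Type*}

lemma stoneCechUnit_mem_closure_image_iff [TopologicalSpace X] [CompletelyRegularSpace X]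
    {x : X} {s : Set X} :
    stoneCechUnit x ∈ closure (stoneCechUnit '' s) ↔ x ∈ closure s := by
  rw [isInducing_stoneCechUnit.closure_eq_preimage_closure_image s, mem_preimage]

lemma AlmostNormal.exists_eq_zero_eq_one_nhds [TopologicalSpace Y] {AY : Submodule ℝ (Y → ℝ)}
    (h : AlmostNormal Y AY) {y₀ y₁ : StoneCech Y} (hne : y₀ ≠ y₁) :
    ∃ φ ∈ AY, ∃ V₀ V₁ : Set (StoneCech Y), IsOpen V₀ ∧ IsOpen V₁ ∧ y₀ ∈ V₀ ∧ y₁ ∈ V₁ ∧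
      (∀ z, stoneCechUnit z ∈ V₀ → φ z = 0) ∧ (∀ z, stoneCechUnit z ∈ V₁ → φ z = 1) := by
  obtain ⟨V₀, hy₀, hV₀, V₁, hy₁, hV₁, hdisj⟩ := exists_open_nhds_disjoint_closure hne
  obtain ⟨φ, hφ, hφ₀, hφ₁⟩ := h.2 (stoneCechUnit ⁻¹' V₀) (stoneCechUnit ⁻¹' V₁) <|
    hdisj.mono (closure_mono (image_preimage_subset _ _))
      (closure_mono (image_preimage_subset _ _))
  exact ⟨φ, hφ, V₀, V₁, hV₀, hV₁, hy₀, hy₁, hφ₀, hφ₁⟩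

namespace AlmostNormallyMultiplicative

lemma exists_nhds_subset_zeroSet_disjoint [TopologicalSpace Y] [TopologicalSpace F]
    [AddCommGroup F] [Module ℝ F] [Nontrivial F] {AYF : Submodule ℝ (Y → F)}
    (h : AlmostNormallyMultiplicative Y F AYF) {y₀ y₁ : StoneCech Y} (hne : y₀ ≠ y₁) :
    ∃ g ∈ AYF, ∃ V₀ V₁ : Set (StoneCech Y), IsOpen V₀ ∧ IsOpen V₁ ∧ y₀ ∈ V₀ ∧ y₁ ∈ V₁ ∧
      stoneCechUnit ⁻¹' V₀ ⊆ zeroSet g ∧ Disjoint (stoneCechUnit ⁻¹' V₁) (zeroSet g) := by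
  obtain ⟨-, hconst, AY, hAY, hmul⟩ := h
  obtain ⟨u, hu⟩ := exists_ne (0 : F)
  obtain ⟨φ, hφ, V₀, V₁, hV₀, hV₁, hy₀, hy₁, hφ₀, hφ₁⟩ := hAY.exists_eq_zero_eq_one_nhds hne
  refine ⟨fun z => φ z • u, hmul φ hφ _ (hconst u), V₀, V₁, hV₀, hV₁, hy₀, hy₁,
    fun z hz => by simp [zeroSet, hφ₀ z hz], disjoint_left.2 fun z hz hzg => ?_⟩
  simp [zeroSet, hφ₁ z hz, hu] at hzg

lemma exists_apply_eq_zero_disjoint_zeroSet [TopologicalSpace X] [CompletelyRegularSpace X]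
    [TopologicalSpace E] [T1Space E] [AddCommGroup E] [Module ℝ E] [Nontrivial E]
    {AXE : Submodule ℝ (X → E)} (h : AlmostNormallyMultiplicative X E AXE)
    {f : X → E} (hf : f ∈ AXE) {x : X} (hfx : f x ≠ 0) :
    ∃ p ∈ AXE, p x = 0 ∧ Disjoint (zeroSet p) (zeroSet f) := by
  obtain ⟨hcont, hconst, AX, hAX, hmul⟩ := h
  obtain ⟨e, he⟩ := exists_ne (0 : E)
  have hclosed : IsClosed (zeroSet f) := isClosed_singleton.preimage (hcont f hf)
  obtain ⟨ψ, hψ, hψx, hψf⟩ := hAX.2 {x} (zeroSet f) <| by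
    rw [image_singleton, closure_singleton, disjoint_singleton_left,
      stoneCechUnit_mem_closure_image_iff, hclosed.closure_eq]
    exact hfx
  refine ⟨fun z => ψ z • e, hmul ψ hψ _ (hconst e), by simp [hψx x rfl],
    disjoint_left.2 fun z hzp hzf => ?_⟩
  simp [zeroSet, hψf z hzf, he] at hzp

end AlmostNormallyMultiplicative

section CommonZeros

variable [TopologicalSpace X] [TopologicalSpace Y] [AddCommGroup E] [Module ℝ E]
  [AddCommGroup F] [Module ℝ F] {AXE : Submodule ℝ (X → E)} {AYF : Submodule ℝ (Y → F)}
  {T : AXE → AYF}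

lemma PreservesCommonZeros.nonempty_iInter_zeroSet_iff (hT : PreservesCommonZeros T)
    {ι : Type*} [Finite ι] [Nonempty ι] (f : ι → AXE) :
    (⋂ i, zeroSet (f i : X → E)).Nonempty ↔ (⋂ i, zeroSet (T (f i) : Y → F)).Nonempty := by
  obtain ⟨n, ⟨e⟩⟩ := Finite.exists_equiv_fin ι
  obtain ⟨k, rfl⟩ : ∃ k, n = k + 1 :=
    Nat.exists_eq_succ_of_ne_zero fun hn => (hn ▸ e (Classical.arbitrary ι)).elim0
  have h := hT k (f ∘ e.symm)
  simp only [Function.comp_apply] at h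
  rwa [e.symm.surjective.iInter_comp fun i => zeroSet (f i : X → E),
    e.symm.surjective.iInter_comp fun i => zeroSet (T (f i) : Y → F)] at h

lemma PreservesCommonZeros.disjoint_zeroSet_iff (hT : PreservesCommonZeros T) (f g : AXE) :
    Disjoint (zeroSet (f : X → E)) (zeroSet (g : X → E)) ↔
      Disjoint (zeroSet (T f : Y → F)) (zeroSet (T g : Y → F)) := by
  simpa [disjoint_iff_inter_eq_empty, ← not_nonempty_iff_eq_empty, inter_eq_iInter,
    Bool.apply_cond] using (hT.nonempty_iInter_zeroSet_iff fun b => cond b f g).not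

lemma exists_mem_zeroSet_of_mem_Zx {x : X} {y : StoneCech Y} (hy : y ∈ Zx T x) {f : AXE}
    (hfx : (f : X → E) x = 0) {V : Set (StoneCech Y)} (hV : IsOpen V) (hyV : y ∈ V) :
    ∃ z ∈ zeroSet (T f : Y → F), stoneCechUnit z ∈ V := by
  obtain ⟨_, hzV, z, hz, rfl⟩ := mem_closure_iff.1 (mem_iInter₂.1 hy f hfx) V hV hyV
  exact ⟨z, hz, hzV⟩

lemma Zx_nonempty (hT : PreservesCommonZeros T) (x : X) : (Zx T x).Nonempty := by
  have key := isCompact_univ.inter_iInter_nonempty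
    (fun f : {f : AXE // (f : X → E) x = 0} => closure (stoneCechUnit '' zeroSet (T f : Y → F)))
    (fun _ => isClosed_closure) fun u => ?_
  · simpa [Zx, iInter_subtype] using key
  -- the zero function pads the finite family, which may be empty
  let fam : Option u → AXE := fun j => j.elim 0 fun f => f.1.1
  have hx : x ∈ ⋂ j, zeroSet (fam j : X → E) := mem_iInter.2 fun j => by
    cases j with
    | none => rfl
    | some f => exact f.1.2
  obtain ⟨y, hy⟩ := (hT.nonempty_iInter_zeroSet_iff fam).1 ⟨x, hx⟩
  exact ⟨stoneCechUnit y, trivial, mem_iInter₂.2 fun f hf =>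
    subset_closure (mem_image_of_mem _ (mem_iInter.1 hy (some ⟨f, hf⟩)))⟩

end CommonZeros

lemma Zx_subsingleton [TopologicalSpace X] [CompletelyRegularSpace X] [TopologicalSpace Y]
    [AddCommGroup E] [Module ℝ E] [TopologicalSpace E] [T1Space E] [Nontrivial E]
    [AddCommGroup F] [Module ℝ F] [TopologicalSpace F] [Nontrivial F]
    {AXE : Submodule ℝ (X → E)} {AYF : Submodule ℝ (Y → F)}
    (hAXE : AlmostNormallyMultiplicative X E AXE) (hAYF : AlmostNormallyMultiplicative Y F AYF)
    {T : AXE → AYF} (hTsurj : Function.Surjective T) (hT : PreservesCommonZeros T) (x : X) :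
    (Zx T x).Subsingleton := by
  intro y₀ hy₀ y₁ hy₁
  by_contra hne
  obtain ⟨g, hg, V₀, V₁, hV₀, hV₁, hy₀V, hy₁V, hgV₀, hgV₁⟩ :=
    hAYF.exists_nhds_subset_zeroSet_disjoint hne
  obtain ⟨f, hf⟩ := hTsurj ⟨g, hg⟩
  have hfx : (f : X → E) x ≠ 0 := fun hfx => by
    obtain ⟨z, hz, hzV⟩ := exists_mem_zeroSet_of_mem_Zx hy₁ hfx hV₁ hy₁V
    rw [hf] at hz
    exact hgV₁.notMem_of_mem_left hzV hz
  obtain ⟨p, hp, hpx, hpf⟩ := hAXE.exists_apply_eq_zero_disjoint_zeroSet f.2 hfx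
  obtain ⟨z, hz, hzV⟩ := exists_mem_zeroSet_of_mem_Zx (f := ⟨p, hp⟩) hy₀ hpx hV₀ hy₀V
  have hTdisj := (hT.disjoint_zeroSet_iff ⟨p, hp⟩ f).1 hpf
  rw [hf] at hTdisj
  exact hTdisj.notMem_of_mem_left hz (hgV₀ hzV)

end

theorem Zx_singleton {X Y E F : Type*}
    [TopologicalSpace X] [CompletelyRegularSpace X]
    [TopologicalSpace Y]
    [AddCommGroup E] [Module ℝ E] [TopologicalSpace E]
    [T2Space E] [Nontrivial E]
    [AddCommGroup F] [Module ℝ F] [TopologicalSpace F]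
    [Nontrivial F]
    {AXE : Submodule ℝ (X → E)} {AYF : Submodule ℝ (Y → F)}
    (hAXE : AlmostNormallyMultiplicative X E AXE)
    (hAYF : AlmostNormallyMultiplicative Y F AYF)
    (T : AXE →ₗ[ℝ] AYF) (hTsurj : Function.Surjective T)
    (hT : PreservesCommonZeros (T : AXE → AYF))
    (x : X) : ∃ y : StoneCech Y, Zx (T : AXE → AYF) x = {y} :=
  exists_eq_singleton_iff_nonempty_subsingleton.2
    ⟨Zx_nonempty hT x, Zx_subsingleton hAXE hAYF hTsurj hT x⟩
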